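/- arXiv:1404.3033 — 2 statements merged into one kernel-verified Lean document; each statement's English description precedes it below -/
import Mathlib

section
/- Optimal target sets on complete graphs (Theorem on complete graphs): Let G be the complete graph on a finite vertex set V, let t : V → ℕ be a threshold function, let λ ∈ ℕ be a latency bound and β ∈ ℕ a budget with β ≤ |V|. Let S ⊆ V consist of β nodes with highest thresholds, i.e., |S| = β and for each v ∈ S and each w ∈ V ∖ S one has t(v) ≥ t(w). Then S is an optimal solution to the (λ,β)-Maximally Influencing Set problem on G: for every S' ⊆ V with |S'| ≤ β, |Active[S',λ]| ≤ |Active[S,λ]|. -/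
open Classical

/-- The influence diffusion (activation) process: `Active G t S τ` is the set of vertices
influenced within round `τ`, starting from target set `S`, in the graph `G` with
threshold function `t`. -/
noncomputable def Active {V : Type*} [Fintype V] (G : SimpleGraph V) (t : V → ℕ)
    (S : Finset V) : ℕ → Finset V
  | 0 => S
  | τ + 1 => Active G t S τ ∪
      Finset.univ.filter fun u => t u ≤ (G.neighborFinset u ∩ Active G t S τ).card

/-!
In the complete graph an inactive vertex `u` becomes active exactly when `t u` is at most the
number of active vertices; since the active sets grow, the active set after round `τ + 1` is
`S ∪ {u | t u ≤ a}`, where `a` is the size of the active set after round `τ`. For a set `S` of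
highest thresholds either no vertex of `S` has threshold `≤ a` or every vertex outside `S` does;
in both cases `|S' ∪ {t ≤ a}| ≤ |S ∪ {t ≤ a}|` whenever `|S'| ≤ |S|`, and induction on the number
of rounds concludes.
-/

open Finset

section

variable {V : Type*} [Fintype V]

noncomputable def sublevel (t : V → ℕ) (c : ℕ) : Finset V :=
  univ.filter fun u => t u ≤ c

lemma mem_sublevel {t : V → ℕ} {c : ℕ} {u : V} : u ∈ sublevel t c ↔ t u ≤ c := by
  simp [sublevel]

lemma sublevel_mono (t : V → ℕ) {c d : ℕ} (h : c ≤ d) : sublevel t c ⊆ sublevel t d :=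
  fun _ hu => mem_sublevel.2 ((mem_sublevel.1 hu).trans h)

section Activation

variable (G : SimpleGraph V) (t : V → ℕ) (S : Finset V)

lemma active_subset_active_succ (τ : ℕ) : Active G t S τ ⊆ Active G t S (τ + 1) :=
  subset_union_left

lemma subset_active (τ : ℕ) : S ⊆ Active G t S τ := by
  induction τ with
  | zero => exact subset_rfl
  | succ τ ih => exact ih.trans (active_subset_active_succ G t S τ)

end Activation

section CompleteGraph

variable (t : V → ℕ) (S : Finset V)

lemma active_top_succ (τ : ℕ) :
    Active ⊤ t S (τ + 1) = Active ⊤ t S τ ∪ sublevel t #(Active ⊤ t S τ) := by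
  ext u
  by_cases hu : u ∈ Active ⊤ t S τ
  · simp [Active, hu]
  · simp only [Active, mem_union, mem_filter, mem_univ, true_and, mem_sublevel]
    rw [inter_eq_right.2 fun v hv => ?_]
    rw [SimpleGraph.mem_neighborFinset, SimpleGraph.top_adj]
    rintro rfl
    exact hu hv

lemma active_top_subset (τ : ℕ) : Active ⊤ t S τ ⊆ S ∪ sublevel t #(Active ⊤ t S τ) := by
  induction τ with
  | zero => exact subset_union_left
  | succ τ ih =>
    have hgrow : S ∪ sublevel t #(Active ⊤ t S τ) ⊆ S ∪ sublevel t #(Active ⊤ t S (τ + 1)) :=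
      union_subset_union subset_rfl
        (sublevel_mono t (card_le_card (active_subset_active_succ ⊤ t S τ)))
    calc Active ⊤ t S (τ + 1) = Active ⊤ t S τ ∪ sublevel t #(Active ⊤ t S τ) :=
          active_top_succ t S τ
      _ ⊆ S ∪ sublevel t #(Active ⊤ t S τ) := union_subset ih subset_union_right
      _ ⊆ S ∪ sublevel t #(Active ⊤ t S (τ + 1)) := hgrow

lemma active_top_succ_eq (τ : ℕ) :
    Active ⊤ t S (τ + 1) = S ∪ sublevel t #(Active ⊤ t S τ) := by
  rw [active_top_succ]
  exact Subset.antisymm (union_subset (active_top_subset t S τ) subset_union_right)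
    (union_subset_union (subset_active ⊤ t S τ) subset_rfl)

end CompleteGraph

section TopThresholds

variable {t : V → ℕ} {S : Finset V}

lemma disjoint_sublevel_or_union_sublevel_eq_univ (hS : ∀ v ∈ S, ∀ w, w ∉ S → t w ≤ t v)
    (c : ℕ) : Disjoint S (sublevel t c) ∨ S ∪ sublevel t c = univ := by
  by_cases h : ∃ w, w ∉ S ∧ c < t w
  · obtain ⟨w, hwS, hcw⟩ := h
    refine Or.inl (disjoint_left.2 fun v hv hvc => ?_)
    exact absurd (hcw.trans_le (hS v hv w hwS)) (not_lt.2 (mem_sublevel.1 hvc))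
  · push Not at h
    refine Or.inr (eq_univ_of_forall fun u => ?_)
    by_cases hu : u ∈ S
    · exact mem_union_left _ hu
    · exact mem_union_right _ (mem_sublevel.2 (h u hu))

lemma card_union_sublevel_le (hS : ∀ v ∈ S, ∀ w, w ∉ S → t w ≤ t v) {S' : Finset V}
    (hS' : #S' ≤ #S) (c : ℕ) : #(S' ∪ sublevel t c) ≤ #(S ∪ sublevel t c) := by
  rcases disjoint_sublevel_or_union_sublevel_eq_univ hS c with hdisj | huniv
  · calc #(S' ∪ sublevel t c) ≤ #S' + #(sublevel t c) := card_union_le _ _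
      _ ≤ #S + #(sublevel t c) := Nat.add_le_add_right hS' _
      _ = #(S ∪ sublevel t c) := (card_union_of_disjoint hdisj).symm
  · rw [huniv]
    exact card_le_univ _

end TopThresholds

end

theorem complete_graph_optimal_target_set_general {V : Type*} [Fintype V] (t : V → ℕ)
    (lam β : ℕ) (S : Finset V) (hScard : S.card = β)
    (hS : ∀ v ∈ S, ∀ w, w ∉ S → t w ≤ t v)
    (S' : Finset V) (hS' : S'.card ≤ β) :
    (Active (⊤ : SimpleGraph V) t S' lam).card ≤
      (Active (⊤ : SimpleGraph V) t S lam).card := by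
  have hcard : #S' ≤ #S := hScard ▸ hS'
  induction lam with
  | zero => exact hcard
  | succ τ ih =>
    rw [active_top_succ_eq t S τ, active_top_succ_eq t S' τ]
    calc #(S' ∪ sublevel t #(Active ⊤ t S' τ))
        ≤ #(S' ∪ sublevel t #(Active ⊤ t S τ)) :=
          card_le_card (union_subset_union subset_rfl (sublevel_mono t ih))
      _ ≤ #(S ∪ sublevel t #(Active ⊤ t S τ)) := card_union_sublevel_le hS hcard _

/-- Optimal target sets on complete graphs: a set `S` of `β` vertices with highest
thresholds is an optimal solution to the `(lam, β)`-Maximally Influencing Set problem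
on the complete graph. -/
theorem complete_graph_optimal_target_set {V : Type*} [Fintype V] (t : V → ℕ)
    (lam β : ℕ) (hβ : β ≤ Fintype.card V) (S : Finset V) (hScard : S.card = β)
    (hS : ∀ v ∈ S, ∀ w, w ∉ S → t w ≤ t v)
    (S' : Finset V) (hS' : S'.card ≤ β) :
    (Active (⊤ : SimpleGraph V) t S' lam).card ≤
      (Active (⊤ : SimpleGraph V) t S lam).card :=
  complete_graph_optimal_target_set_general t lam β S hScard hS S' hS'
end

section
/- Cycle-to-path reduction for untargeted high-threshold vertices: Let C_n be the cycle on n ≥ 3 vertices with vertex set V and threshold function t : V → ℕ, let v ∈ V satisfy t(v) ≥ 2, and let P = C_n − v be the path obtained by deleting v (with thresholds restricted from t). Then for every target set S ⊆ V with v ∉ S and every round τ ≥ 0, Active_{C_n}[S,τ] ∖ {v} = Active_{P}[S,τ]. Consequently, |Active_{C_n}[S,λ]| equals |Active_{P}[S,λ]| plus 1 if v ∈ Active_{C_n}[S,λ] and equals |Active_{P}[S,λ]| otherwise. -/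
open Classical

/-
A vertex `v` with `deg v ≤ t v` that is not targeted can only become active once all of its
neighbours already are. Hence `v` never contributes to the activation of another vertex: every
neighbour it could help is active before `v` is. Removing `v` from the graph therefore does not
change the process on the remaining vertices. In the cycle every vertex has degree `2`.
-/

open Finset SimpleGraph

lemma SimpleGraph.card_neighborFinset_induce_inter {V : Type*} [DecidableEq V]
    (G : SimpleGraph V) {s : Set V} (u : s) [Fintype ((G.induce s).neighborSet u)]
    [Fintype (G.neighborSet u)] (B : Finset s) :
    #((G.induce s).neighborFinset u ∩ B) =
      #(G.neighborFinset u ∩ B.map (Function.Embedding.subtype _)) := by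
  rw [← card_map (Function.Embedding.subtype _)]
  congr 1
  ext w
  simp

lemma Finset.map_subtype_eq_erase_of_forall_mem_iff {V : Type*} [DecidableEq V] {v : V}
    {A' : Finset {w | w ≠ v}} {A : Finset V}
    (h : ∀ w, w ∈ A' ↔ ↑w ∈ A) : A'.map (Function.Embedding.subtype _) = A.erase v := by
  ext x
  rw [mem_map, mem_erase]
  constructor
  · rintro ⟨x, hx, rfl⟩
    exact ⟨x.2, (h x).1 hx⟩
  · rintro ⟨hxv, hx⟩
    exact ⟨⟨x, hxv⟩, (h _).2 hx, rfl⟩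

namespace Active

variable {V : Type*} [Fintype V] (G : SimpleGraph V) (t : V → ℕ) (S : Finset V)

@[simp]
lemma zero : Active G t S 0 = S := by
  rw [Active]

variable [DecidableEq V]

lemma mem_succ_iff {τ : ℕ} {u : V} :
    u ∈ Active G t S (τ + 1) ↔
      u ∈ Active G t S τ ∨ t u ≤ #(G.neighborFinset u ∩ Active G t S τ) := by
  simp only [Active, mem_union, mem_filter, mem_univ, true_and]
  -- `Active` intersects using the classical `DecidableEq V`
  congr!

lemma subset_succ (τ : ℕ) : Active G t S τ ⊆ Active G t S (τ + 1) :=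
  fun _ hu => (mem_succ_iff G t S).2 (Or.inl hu)

variable {G t S} {v : V}

lemma neighborFinset_subset_of_mem [Fintype (G.neighborSet v)] (hdeg : G.degree v ≤ t v)
    (hv : v ∉ S) (τ : ℕ) (hvτ : v ∈ Active G t S τ) : G.neighborFinset v ⊆ Active G t S τ := by
  induction τ with
  | zero => exact absurd hvτ (by simpa using hv)
  | succ τ ih =>
    refine ((mem_succ_iff G t S).1 hvτ).elim (fun h => (ih h).trans (subset_succ G t S τ))
      fun h => ?_
    have hall : G.neighborFinset v ∩ Active G t S τ = G.neighborFinset v := by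
      refine eq_of_subset_of_card_le inter_subset_left ?_
      calc #(G.neighborFinset v) = G.degree v := card_neighborFinset_eq_degree G v
        _ ≤ #(_ ∩ Active G t S τ) := hdeg.trans h
        _ = #(G.neighborFinset v ∩ Active G t S τ) := by congr!
    exact (hall ▸ inter_subset_right).trans (subset_succ G t S τ)

lemma mem_or_le_card_inter_erase [Fintype (G.neighborSet v)] (hdeg : G.degree v ≤ t v)
    (hv : v ∉ S) {τ : ℕ} {w : V} (hw : t w ≤ #(G.neighborFinset w ∩ Active G t S τ)) :
    w ∈ Active G t S τ ∨ t w ≤ #(G.neighborFinset w ∩ (Active G t S τ).erase v) := by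
  by_cases hvw : v ∈ G.neighborFinset w ∩ Active G t S τ
  · obtain ⟨hadj, hvτ⟩ := mem_inter.1 hvw
    refine Or.inl (neighborFinset_subset_of_mem hdeg hv τ hvτ ?_)
    simpa [adj_comm] using hadj
  · rwa [inter_erase, erase_eq_of_notMem hvw, or_iff_right_of_imp fun _ => hw]

theorem mem_induce_iff [Fintype (G.neighborSet v)] (hdeg : G.degree v ≤ t v) (hv : v ∉ S)
    (τ : ℕ) (w : {w | w ≠ v}) :
    w ∈ Active (G.induce {w | w ≠ v}) (fun w => t w.1) (S.subtype (· ∈ {w | w ≠ v})) τ ↔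
      ↑w ∈ Active G t S τ := by
  induction τ generalizing w with
  | zero => simp
  | succ τ ih =>
    have hmap := map_subtype_eq_erase_of_forall_mem_iff ih
    rw [mem_succ_iff, mem_succ_iff, ih, card_neighborFinset_induce_inter, hmap]
    constructor
    · rintro (h | h)
      · exact Or.inl h
      · exact Or.inr (h.trans (card_le_card (inter_subset_inter_left (erase_subset _ _))))
    · rintro (h | h)
      · exact Or.inl h
      · exact mem_or_le_card_inter_erase hdeg hv h

theorem erase_eq_image_induce [Fintype (G.neighborSet v)] (hdeg : G.degree v ≤ t v)
    (hv : v ∉ S) (τ : ℕ) :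
    (Active G t S τ).erase v =
      (Active (G.induce {w | w ≠ v}) (fun w => t w.1) (S.subtype (· ∈ {w | w ≠ v})) τ).image
        Subtype.val := by
  rw [← map_subtype_eq_erase_of_forall_mem_iff (mem_induce_iff hdeg hv τ), map_eq_image]
  rfl

theorem card_eq_card_induce_add [Fintype (G.neighborSet v)] (hdeg : G.degree v ≤ t v)
    (hv : v ∉ S) (τ : ℕ) :
    #(Active G t S τ) =
      #(Active (G.induce {w | w ≠ v}) (fun w => t w.1) (S.subtype (· ∈ {w | w ≠ v})) τ) +
        if v ∈ Active G t S τ then 1 else 0 := by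
  rw [← card_map (Function.Embedding.subtype _),
    map_subtype_eq_erase_of_forall_mem_iff (mem_induce_iff hdeg hv τ)]
  split_ifs with hvτ
  · exact (card_erase_add_one hvτ).symm
  · rw [erase_eq_of_notMem hvτ, add_zero]

end Active

/-- Cycle-to-path reduction for untargeted high-threshold vertices: if `t v ≥ 2` and
`v ∉ S`, then at every round the activation process in the cycle `C_n`, with `v` removed,
coincides with the activation process in the path `C_n − v`; consequently the number of
influenced vertices in the cycle equals the number in the path, plus one exactly when `v`
itself is influenced. -/
theorem cycle_to_path_reduction (n : ℕ) (hn : 3 ≤ n) (t : Fin n → ℕ) (v : Fin n)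
    (htv : 2 ≤ t v) (S : Finset (Fin n)) (hv : v ∉ S) :
    (∀ τ : ℕ,
      (Active (SimpleGraph.cycleGraph n) t S τ).erase v =
        (Active ((SimpleGraph.cycleGraph n).induce {w : Fin n | w ≠ v})
          (fun w => t w.1) (S.subtype (· ∈ {w : Fin n | w ≠ v})) τ).image Subtype.val)
    ∧
    (∀ lam : ℕ,
      (Active (SimpleGraph.cycleGraph n) t S lam).card =
        (Active ((SimpleGraph.cycleGraph n).induce {w : Fin n | w ≠ v})
          (fun w => t w.1) (S.subtype (· ∈ {w : Fin n | w ≠ v})) lam).card +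
        (if v ∈ Active (SimpleGraph.cycleGraph n) t S lam then 1 else 0)) := by
  obtain ⟨m, rfl⟩ : ∃ m, n = m + 3 := ⟨n - 3, by omega⟩
  have hdeg : (cycleGraph (m + 3)).degree v ≤ t v := cycleGraph_degree_three_le ▸ htv
  exact ⟨Active.erase_eq_image_induce hdeg hv, Active.card_eq_card_induce_add hdeg hv⟩
end
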